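/- Let λₙ = (n−1/2)²π², μ > 0, and N a positive integer with −λₙ + μ < 0 for all n > N. Let Λ_N = diag(−λ₁+μ,…,−λ_N+μ), Γ_N = [γ₁,…,γ_N] a row vector, and L_N ∈ ℝᴺ such that Λ_N + L_N Γ_N is Hurwitz. In the orthonormal basis {φₙ}, the operator A₂ + F₂ C₁S on L²(0,1), where F₂ c = c ∑_{n=1}^N lₙ φₙ and C₁S f = ∑_{n=1}^∞ γₙ ⟨f, φₙ⟩, has the property: every eigenvalue λ of A₂ + F₂C₁S either is an eigenvalue of Λ_N + L_N Γ_N or equals −λ_{j₀} + μ for some j₀ > N; in both cases Re λ < 0. -/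

import Mathlib

/-!
A nonzero eigenvector `z` of the closed loop either has a nonzero mode `z n` with `n ≥ N`, which
the feedback does not reach, so the eigenvalue is the open-loop one `-λₙ + μ < 0`; or it is
supported on the first `N` modes, where the eigenproblem is exactly that of `Λ_N + L_N Γ_N`, whose
spectrum lies in the open left half-plane.
-/

open Real

open Matrix Module.End

theorem Matrix.mem_spectrum_of_mulVec_eq_smul {n R : Type*} [Fintype n] [DecidableEq n]
    [CommRing R] {A : Matrix n n R} {μ : R} {v : n → R} (hv : v ≠ 0) (h : A *ᵥ v = μ • v) :
    μ ∈ spectrum R A := by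
  rw [← Matrix.spectrum_toLin']
  exact (hasEigenvalue_of_hasEigenvector
    ⟨mem_eigenspace_iff.mpr (by rwa [toLin'_apply]), hv⟩).mem_spectrum

/-- The eigenvalue equation of `diag d + F C` written in modal coordinates, where the feedback
`F c = c ∑_{i<N} lᵢ φᵢ` only reaches the first `N` modes and `C z = ∑ γⱼ zⱼ`. -/
def IsFeedbackEigenpair {N : ℕ} (d : ℕ → ℂ) (l : Fin N → ℂ) (γ : ℕ → ℂ) (Λ : ℂ) (z : ℕ → ℂ) :
    Prop :=
  ∀ n, d n * z n + (if h : n < N then l ⟨n, h⟩ else 0) * ∑' j, γ j * z j = Λ * z n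

namespace IsFeedbackEigenpair

variable {N : ℕ} {d : ℕ → ℂ} {l : Fin N → ℂ} {γ : ℕ → ℂ} {Λ : ℂ} {z : ℕ → ℂ}

theorem eq_of_le_of_ne_zero (heig : IsFeedbackEigenpair d l γ Λ z) {n : ℕ} (hn : N ≤ n)
    (hzn : z n ≠ 0) : Λ = d n := by
  have h := heig n
  rw [dif_neg (by omega), zero_mul, add_zero] at h
  exact (mul_right_cancel₀ hzn h).symm

theorem mem_spectrum (heig : IsFeedbackEigenpair d l γ Λ z) (hz : z ≠ 0)
    (htail : ∀ n, N ≤ n → z n = 0) :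
    Λ ∈ spectrum ℂ (diagonal (fun i : Fin N => d i) + vecMulVec l (fun j : Fin N => γ j)) := by
  set v : Fin N → ℂ := fun i => z i
  have hv : v ≠ 0 := by
    contrapose! hz
    funext n
    by_cases hn : n < N
    · exact congrFun hz ⟨n, hn⟩
    · exact htail n (not_lt.mp hn)
  have hsum : ∑' j, γ j * z j = ∑ j : Fin N, γ j * v j := by
    rw [tsum_eq_sum (s := Finset.range N) fun j hj => by
      rw [htail j (by simpa using hj), mul_zero]]
    exact (Fin.sum_univ_eq_sum_range (fun j => γ j * z j) N).symm
  refine Matrix.mem_spectrum_of_mulVec_eq_smul hv (funext fun i => ?_)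
  have h := heig i
  rw [dif_pos i.isLt, Fin.eta, hsum] at h
  rw [add_mulVec, vecMulVec_mulVec, Pi.add_apply, mulVec_diagonal]
  simpa [dotProduct, mul_comm] using h

end IsFeedbackEigenpair

theorem closed_loop_eigenvalues_negative_general {N : ℕ}
    (μ : ℝ)
    (lam : ℕ → ℝ)
    (hN : ∀ n : ℕ, N ≤ n → -lam n + μ < 0)
    (l : Fin N → ℝ) (γ : ℕ → ℝ)
    (M : Matrix (Fin N) (Fin N) ℂ)
    (hM : M = Matrix.diagonal (fun i : Fin N => ((-lam i + μ : ℝ) : ℂ)) +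
      Matrix.vecMulVec (fun i => (l i : ℂ)) (fun j : Fin N => (γ j : ℂ)))
    (hHurwitz : ∀ ζ ∈ spectrum ℂ M, ζ.re < 0)
    (Λ : ℂ) (z : ℕ → ℂ) (hz : z ≠ 0)
    (heig : ∀ n : ℕ,
      ((-lam n + μ : ℝ) : ℂ) * z n +
        (if h : n < N then (l ⟨n, h⟩ : ℂ) else 0) * (∑' j, (γ j : ℂ) * z j)
      = Λ * z n) :
    (Λ ∈ spectrum ℂ M ∨ ∃ j₀ : ℕ, N ≤ j₀ ∧ Λ = ((-lam j₀ + μ : ℝ) : ℂ)) ∧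
      Λ.re < 0 := by
  replace heig : IsFeedbackEigenpair (fun n => ((-lam n + μ : ℝ) : ℂ)) (fun i => (l i : ℂ))
      (fun j => (γ j : ℂ)) Λ z := heig
  by_cases htail : ∃ n, N ≤ n ∧ z n ≠ 0
  · obtain ⟨n, hn, hzn⟩ := htail
    have hΛ := heig.eq_of_le_of_ne_zero hn hzn
    refine ⟨Or.inr ⟨n, hn, hΛ⟩, ?_⟩
    simpa [hΛ] using hN n hn
  · push Not at htail
    have hmem : Λ ∈ spectrum ℂ M := hM ▸ heig.mem_spectrum hz htail
    exact ⟨Or.inl hmem, hHurwitz Λ hmem⟩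

/-- Every eigenvalue of the modally-decomposed operator `A₂ + F₂ C₁S` is either
an eigenvalue of `Λ_N + L_N Γ_N` or of the form `-λ_{j₀} + μ` with `j₀ > N`;
in both cases it has negative real part.  (Indices are shifted so that the
`n`-th mode, `n ≥ 1`, corresponds to index `n - 1`.) -/
theorem closed_loop_eigenvalues_negative {N : ℕ}
    (μ : ℝ) (hμ : 0 < μ)
    (lam : ℕ → ℝ) (hlam : ∀ n : ℕ, lam n = ((n : ℝ) + 1 - 1/2)^2 * π^2)
    (hN : ∀ n : ℕ, N ≤ n → -lam n + μ < 0)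
    (l : Fin N → ℝ) (γ : ℕ → ℝ)
    (M : Matrix (Fin N) (Fin N) ℂ)
    (hM : M = Matrix.diagonal (fun i : Fin N => ((-lam i + μ : ℝ) : ℂ)) +
      Matrix.vecMulVec (fun i => (l i : ℂ)) (fun j : Fin N => (γ j : ℂ)))
    (hHurwitz : ∀ ζ ∈ spectrum ℂ M, ζ.re < 0)
    (Λ : ℂ) (z : ℕ → ℂ) (hz : z ≠ 0)
    (hz2 : Summable (fun n => ‖z n‖ ^ 2))
    (hzγ : Summable (fun n => (γ n : ℂ) * z n))
    (heig : ∀ n : ℕ,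
      ((-lam n + μ : ℝ) : ℂ) * z n +
        (if h : n < N then (l ⟨n, h⟩ : ℂ) else 0) * (∑' j, (γ j : ℂ) * z j)
      = Λ * z n) :
    (Λ ∈ spectrum ℂ M ∨ ∃ j₀ : ℕ, N ≤ j₀ ∧ Λ = ((-lam j₀ + μ : ℝ) : ℂ)) ∧
      Λ.re < 0 :=
  closed_loop_eigenvalues_negative_general μ lam hN l γ M hM hHurwitz Λ z hz heig
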